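/- arXiv:0905.4511 — 6 statements merged into one kernel-verified Lean document; each statement's English description precedes it below -/
import Mathlib

section
/- Let A ⊆ ℕ^n be a finite set, N = conv(A + ℝ≥0^n) the Newton polyhedron, and for a ∈ A define the ideal tangent cone IT_a = ℕ-span of {a' - a : a' ∈ A, a' ≠ a} ∪ {e_1,...,e_n} in ℤ^n. Then IT_a is pointed (IT_a ∩ (-IT_a) = {0}) if and only if a is a vertex (extreme point) of N. -/
/-!
Write `G_a = {a' - a : a' ∈ A, a' ≠ a} ∪ {e_1, …, e_n}`, so that `IT_a` is the additive monoid
generated by `G_a`. Both conditions are equivalent to `0 ∉ conv(G_a)` in `ℝⁿ`.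

For the Newton polyhedron: if `a` is a vertex, then `a + G_a ⊆ N \ {a}`, which is convex, so
`a ∉ a + conv(G_a)`. Conversely, if `0 ∉ conv(G_a)`, a linear functional `f` separating `0` from
the finite set `G_a` is negative on `G_a`, hence attains its maximum over `N` exactly at `a`.

For the cone: a nonzero `x` with `x, -x ∈ IT_a` gives a nontrivial vanishing `ℕ`-combination
of `G_a`, and normalising puts `0` into `conv(G_a)`. Conversely, Carathéodory writes `0` as a
convex combination of affinely independent integer points; those weights are unique, hence
rational, and clearing denominators gives a vanishing `ℕ`-combination with positive coefficients.
-/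

open Pointwise

section IdealTangentGenerators

variable {ι R : Type*} [DecidableEq ι] [Ring R]

def idealTangentGenerators (A : Set (ι → R)) (a : ι → R) : Set (ι → R) :=
  {v | ∃ b ∈ A, b ≠ a ∧ v = b - a} ∪ Set.range fun i => Pi.single i 1

theorem zero_notMem_idealTangentGenerators [Nontrivial R] (A : Set (ι → R)) (a : ι → R) :
    0 ∉ idealTangentGenerators A a := by
  rintro (⟨b, -, hba, hb⟩ | ⟨i, hi⟩)
  · exact hba (sub_eq_zero.1 hb.symm)
  · simpa using congrFun hi i

theorem image_idealTangentGenerators {S : Type*} [Ring S] (f : R →+* S)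
    (hf : Function.Injective f) (A : Set (ι → R)) (a : ι → R) :
    f.compLeft ι '' idealTangentGenerators A a =
      idealTangentGenerators (f.compLeft ι '' A) (f.compLeft ι a) := by
  have hinj : Function.Injective (f.compLeft ι) := hf.comp_left
  simp only [idealTangentGenerators, Set.image_union, ← Set.range_comp]
  congr 1
  · ext v
    simp only [Set.mem_image, Set.mem_ofPred_eq]
    constructor
    · rintro ⟨_, ⟨b, hb, hba, rfl⟩, rfl⟩
      exact ⟨_, ⟨b, hb, rfl⟩, fun h => hba (hinj h), map_sub _ _ _⟩
    · rintro ⟨_, ⟨b, hb, rfl⟩, hba, rfl⟩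
      exact ⟨b - a, ⟨b, hb, fun h => hba (congrArg _ h), rfl⟩, map_sub _ _ _⟩
  · congr 1
    funext i
    ext j
    simp [Pi.single_apply, apply_ite f]

end IdealTangentGenerators

section NewtonPolyhedron

theorem convex_insert_setOf_lt {E : Type*} [AddCommGroup E] [Module ℝ E] (f : E →ₗ[ℝ] ℝ)
    (a : E) : Convex ℝ (insert a {y | f y < f a}) := by
  rw [convex_iff_openSegment_subset]
  rintro x hx y hy _ ⟨s, t, hs, ht, hst, rfl⟩
  have hle : ∀ z ∈ insert a {y | f y < f a}, f z ≤ f a := by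
    rintro z (rfl | hz)
    exacts [le_rfl, hz.le]
  by_cases hxy : x = a ∧ y = a
  · obtain ⟨rfl, rfl⟩ := hxy
    exact Or.inl (Convex.combo_self hst _)
  right
  simp only [Set.mem_ofPred_eq, map_add, map_smul, smul_eq_mul]
  have hfa : f a = s * f a + t * f a := by rw [← add_mul, hst, one_mul]
  rcases not_and_or.1 hxy with hxa | hya
  · have hlt : f x < f a := (Set.mem_insert_iff.1 hx).resolve_left hxa
    linarith [mul_lt_mul_of_pos_left hlt hs, mul_le_mul_of_nonneg_left (hle y hy) ht.le]
  · have hlt : f y < f a := (Set.mem_insert_iff.1 hy).resolve_left hya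
    linarith [mul_lt_mul_of_pos_left hlt ht, mul_le_mul_of_nonneg_left (hle x hx) hs.le]

variable {ι : Type*} [DecidableEq ι]

theorem eq_zero_or_apply_neg_of_nonneg [Fintype ι] {f : (ι → ℝ) →ₗ[ℝ] ℝ}
    (hf : ∀ i, f (Pi.single i 1) < 0) {u : ι → ℝ} (hu : ∀ i, 0 ≤ u i) : u = 0 ∨ f u < 0 := by
  have hsum : f u = ∑ i, u i * f (Pi.single i 1) := by
    rw [f.pi_apply_eq_sum_univ u]
    congr! 3 with i
    ext j
    simp [Pi.single_apply, eq_comm]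
  by_cases hu0 : u = 0
  · exact Or.inl hu0
  obtain ⟨i, hi⟩ := Function.ne_iff.1 hu0
  refine Or.inr (hsum ▸ Finset.sum_neg' (fun j _ => ?_) ⟨i, Finset.mem_univ i, ?_⟩)
  · exact mul_nonpos_of_nonneg_of_nonpos (hu j) (hf j).le
  · exact mul_neg_of_pos_of_neg (lt_of_le_of_ne (hu i) (Ne.symm hi)) (hf i)

theorem zero_notMem_convexHull_idealTangentGenerators {A : Set (ι → ℝ)} {a : ι → ℝ}
    (haA : a ∈ A) (ha : a ∈ (convexHull ℝ (A + {x | ∀ i, 0 ≤ x i})).extremePoints ℝ) :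
    (0 : ι → ℝ) ∉ convexHull ℝ (idealTangentGenerators A a) := by
  set N := convexHull ℝ (A + {x : ι → ℝ | ∀ i, 0 ≤ x i})
  rw [(convex_convexHull ℝ _).mem_extremePoints_iff_mem_sdiff_convexHull_sdiff] at ha
  have hmem : ∀ b ∈ A, ∀ u : ι → ℝ, (∀ i, 0 ≤ u i) → b + u ∈ N := fun b hb u hu =>
    subset_convexHull ℝ _ (Set.add_mem_add hb hu)
  have hshift : a +ᵥ idealTangentGenerators A a ⊆ N \ {a} := by
    rintro _ ⟨_, ⟨b, hb, hba, rfl⟩ | ⟨i, rfl⟩, rfl⟩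
    · show a + (b - a) ∈ _
      rw [add_sub_cancel]
      exact ⟨by simpa using hmem b hb 0 fun _ => le_rfl, hba⟩
    · refine ⟨hmem a haA _ fun j => ?_, ?_⟩
      · by_cases h : j = i <;> simp [h]
      · simp
  intro h0
  apply ha.2
  have := convexHull_mono (𝕜 := ℝ) hshift
  rw [convexHull_vadd] at this
  simpa using this (Set.vadd_mem_vadd_set h0)

theorem mem_extremePoints_of_zero_notMem_convexHull_idealTangentGenerators [Fintype ι]
    {A : Set (ι → ℝ)} (hA : A.Finite) {a : ι → ℝ} (haA : a ∈ A)
    (h0 : (0 : ι → ℝ) ∉ convexHull ℝ (idealTangentGenerators A a)) :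
    a ∈ (convexHull ℝ (A + {x | ∀ i, 0 ≤ x i})).extremePoints ℝ := by
  have hfin : (idealTangentGenerators A a).Finite :=
    ((hA.image (· - a)).subset (by rintro _ ⟨b, hb, -, rfl⟩; exact ⟨b, hb, rfl⟩)).union
      (Set.finite_range _)
  obtain ⟨f, u, hfu, hu⟩ := geometric_hahn_banach_closed_point (convex_convexHull ℝ _)
    (hfin.isClosed_convexHull (𝕜 := ℝ)) h0
  have hneg : ∀ v ∈ idealTangentGenerators A a, f v < 0 := fun v hv =>
    (hfu v (subset_convexHull ℝ _ hv)).trans (by simpa using hu)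
  have hsub : A + {x | ∀ i, 0 ≤ x i} ⊆ insert a {y | f y < f a} := by
    rintro _ ⟨b, hb, v, hv, rfl⟩
    have hb' : b = a ∨ f b < f a := by
      refine or_iff_not_imp_left.2 fun hba => ?_
      simpa using hneg _ (Or.inl ⟨b, hb, hba, rfl⟩)
    rcases eq_zero_or_apply_neg_of_nonneg (f := f.toLinearMap)
      (fun i => hneg _ (Or.inr ⟨i, rfl⟩)) hv with rfl | hv
    · simpa using hb'
    · right
      rcases hb' with rfl | hb'
      · simpa using hv
      · simp only [ContinuousLinearMap.coe_coe] at hv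
        simp only [Set.mem_ofPred_eq, map_add]
        linarith
  refine exposedPoints_subset_extremePoints (𝕜 := ℝ)
    ⟨subset_convexHull ℝ _ ⟨a, haA, 0, fun _ => le_rfl, add_zero a⟩, f, fun y hy => ?_⟩
  rcases convexHull_min hsub (convex_insert_setOf_lt f.toLinearMap a) hy with rfl | hlt
  · exact ⟨le_rfl, fun _ => rfl⟩
  · exact ⟨hlt.le, fun h => absurd h (not_le.2 hlt)⟩

theorem mem_extremePoints_iff_zero_notMem_convexHull_idealTangentGenerators [Fintype ι]
    {A : Set (ι → ℝ)} (hA : A.Finite) {a : ι → ℝ} (haA : a ∈ A) :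
    a ∈ (convexHull ℝ (A + {x | ∀ i, 0 ≤ x i})).extremePoints ℝ ↔
      (0 : ι → ℝ) ∉ convexHull ℝ (idealTangentGenerators A a) :=
  ⟨zero_notMem_convexHull_idealTangentGenerators haA,
    mem_extremePoints_of_zero_notMem_convexHull_idealTangentGenerators hA haA⟩

end NewtonPolyhedron

section PointedClosure

theorem zero_mem_convexHull_of_mem_closure_of_neg_mem {E : Type*} [AddCommGroup E]
    [Module ℝ E] {T : Set E} {x : E} (hx : x ∈ AddSubmonoid.closure T)
    (hnx : -x ∈ AddSubmonoid.closure T) (hx0 : x ≠ 0) : (0 : E) ∈ convexHull ℝ T := by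
  classical
  rw [← Subtype.range_coe (s := T)] at hx hnx
  obtain ⟨m, rfl⟩ := AddSubmonoid.exists_finsupp_of_mem_closure_range _ _ hx
  obtain ⟨m', hm'⟩ := AddSubmonoid.exists_finsupp_of_mem_closure_range _ _ hnx
  set μ := m + m' with hμdef
  have hμ : μ.sum (fun t k => k • (t : E)) = 0 := by
    rw [hμdef, Finsupp.sum_add_index' (h := fun (t : T) (k : ℕ) => k • (t : E))
      (fun _ => zero_smul ℕ _) (fun _ _ _ => add_smul _ _ _), ← hm', add_neg_cancel]
  have hμ0 : μ ≠ 0 := by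
    intro h
    apply hx0
    rw [(add_eq_zero.1 h).1, Finsupp.sum_zero_index]
  have hpos : 0 < ∑ t ∈ μ.support, (μ t : ℝ) := by
    obtain ⟨t, ht⟩ := Finsupp.support_nonempty_iff.2 hμ0
    exact Finset.sum_pos' (fun _ _ => Nat.cast_nonneg _)
      ⟨t, ht, Nat.cast_pos.2 (Nat.pos_of_ne_zero (Finsupp.mem_support_iff.1 ht))⟩
  have hcm := μ.support.centerMass_mem_convexHull (fun _ _ => Nat.cast_nonneg _) hpos
    (z := fun t : T => (t : E)) fun t _ => t.2
  have hsum : ∑ t ∈ μ.support, (μ t : ℝ) • (t : E) = 0 := by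
    simp_rw [Nat.cast_smul_eq_nsmul]
    exact hμ
  rwa [Finset.centerMass, hsum, smul_zero] at hcm

theorem exists_ne_zero_mem_closure_neg_mem_of_sum_nsmul_eq_zero {M κ : Type*} [AddCommGroup M]
    [IsAddTorsionFree M] [Fintype κ] [Nonempty κ] {S : Set M} (hS : 0 ∉ S) {g : κ → M}
    (hg : ∀ k, g k ∈ S) {m : κ → ℕ} (hm : ∀ k, m k ≠ 0) (hsum : ∑ k, m k • g k = 0) :
    ∃ x ≠ 0, x ∈ AddSubmonoid.closure S ∧ -x ∈ AddSubmonoid.closure S := by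
  classical
  obtain ⟨k₀⟩ := ‹Nonempty κ›
  have hmem : ∀ k, m k • g k ∈ AddSubmonoid.closure S := fun k =>
    nsmul_mem (AddSubmonoid.subset_closure (hg k)) _
  refine ⟨m k₀ • g k₀, smul_ne_zero (hm k₀) fun h => hS (h ▸ hg k₀), hmem k₀, ?_⟩
  rw [← Finset.add_sum_erase _ _ (Finset.mem_univ k₀)] at hsum
  rw [neg_eq_of_add_eq_zero_right hsum]
  exact AddSubmonoid.sum_mem _ fun k _ => hmem k

variable {ι κ : Type*}

theorem exists_ratCast_eq_of_affineIndependent [Fintype κ] {g : κ → ι → ℤ}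
    (hg : AffineIndependent ℝ fun k => (Int.castRingHom ℝ).compLeft ι (g k)) {w : κ → ℝ}
    (hw1 : ∑ k, w k = 1) (hw0 : ∑ k, w k • (Int.castRingHom ℝ).compLeft ι (g k) = 0) :
    ∃ q : κ → ℚ, ∀ k, (q k : ℝ) = w k := by
  -- A `ℚ`-linear retraction `π : ℝ → ℚ` preserves both constraints on the weights, whose
  -- coefficients are integers; by affine independence the weights are then fixed by `π`.
  obtain ⟨π, hπ⟩ := (Algebra.linearMap ℚ ℝ).exists_leftInverse_of_injective
    (LinearMap.ker_eq_bot.2 (algebraMap ℚ ℝ).injective)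
  have hπ1 : π 1 = 1 := by simpa using LinearMap.congr_fun hπ 1
  have hπz : ∀ (r : ℝ) (m : ℤ), π (r * m) = π r * m := fun r m => by
    rw [mul_comm, ← zsmul_eq_mul, map_zsmul, zsmul_eq_mul, mul_comm]
  set w' : κ → ℝ := fun k => (π (w k) : ℝ)
  have hw'1 : ∑ k, w' k = 1 := by
    simp only [w', ← Rat.cast_sum, ← map_sum, hw1, hπ1, Rat.cast_one]
  have hw'0 : ∑ k, w' k • (Int.castRingHom ℝ).compLeft ι (g k) = 0 := by
    funext j
    have := congrArg (fun v => π (v j)) hw0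
    simp [w', Finset.sum_apply, hπz] at this ⊢
    exact_mod_cast this
  refine ⟨fun k => π (w k), congrFun ?_⟩
  refine (affineIndependent_iff_eq_of_fintype_affineCombination_eq ℝ _).1 hg w' w hw'1 hw1 ?_
  rw [Finset.affineCombination_eq_linear_combination _ _ _ hw'1,
    Finset.affineCombination_eq_linear_combination _ _ _ hw1, hw'0, hw0]

theorem exists_natCast_eq_mul_of_nonneg [Fintype κ] (q : κ → ℚ) (hq : ∀ k, 0 ≤ q k) :
    ∃ d : ℕ, 0 < d ∧ ∃ m : κ → ℕ, ∀ k, (m k : ℚ) = d * q k := by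
  refine ⟨∏ k, (q k).den, Finset.prod_pos fun k _ => (q k).den_pos,
    fun k => (q k).num.toNat * ((∏ k, (q k).den) / (q k).den), fun k => ?_⟩
  obtain ⟨e, he⟩ : (q k).den ∣ ∏ k, (q k).den := Finset.dvd_prod_of_mem _ (Finset.mem_univ k)
  dsimp only
  rw [he, Nat.mul_div_cancel_left _ (q k).den_pos]
  have hnum : ((q k).num.toNat : ℚ) = (q k).num := by
    exact_mod_cast Int.toNat_of_nonneg (Rat.num_nonneg.2 (hq k))
  push_cast
  rw [hnum, ← Rat.mul_den_eq_num]
  ring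

theorem exists_ne_zero_mem_closure_neg_mem_of_zero_mem_convexHull {S : Set (ι → ℤ)}
    (hS : 0 ∉ S) (h0 : (0 : ι → ℝ) ∈ convexHull ℝ ((Int.castRingHom ℝ).compLeft ι '' S)) :
    ∃ x ≠ 0, x ∈ AddSubmonoid.closure S ∧ -x ∈ AddSubmonoid.closure S := by
  set c := (Int.castRingHom ℝ).compLeft ι
  obtain ⟨κ, _, z, w, hzS, hz, hw, hw1, hw0⟩ := eq_pos_convex_span_of_mem_convexHull h0
  choose g hgS hgz using fun k => hzS (Set.mem_range_self k)
  obtain rfl : z = fun k => c (g k) := funext fun k => (hgz k).symm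
  obtain ⟨q, hq⟩ := exists_ratCast_eq_of_affineIndependent hz hw1 hw0
  obtain ⟨d, hd, m, hm⟩ := exists_natCast_eq_mul_of_nonneg q fun k => by
    exact_mod_cast (hq k).symm ▸ (hw k).le
  have hmw : ∀ k, (m k : ℝ) = d * w k := fun k => by
    rw [← hq k]
    exact_mod_cast hm k
  have hsum : ∑ k, m k • g k = 0 := Int.cast_injective.comp_left <| by
    calc c (∑ k, m k • g k) = (d : ℝ) • ∑ k, w k • c (g k) := by
          rw [map_sum, Finset.smul_sum]
          refine Finset.sum_congr rfl fun k _ => ?_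
          rw [map_nsmul, ← Nat.cast_smul_eq_nsmul ℝ, hmw, smul_smul]
      _ = c 0 := by rw [hw0, smul_zero, map_zero]
  have : Nonempty κ := by
    by_contra h
    simp [not_nonempty_iff.1 h] at hw1
  refine exists_ne_zero_mem_closure_neg_mem_of_sum_nsmul_eq_zero hS hgS (fun k hk => ?_) hsum
  have := hmw k
  rw [hk, Nat.cast_zero] at this
  exact (mul_pos (Nat.cast_pos.2 hd) (hw k)).ne this

theorem closure_pointed_iff_zero_notMem_convexHull {S : Set (ι → ℤ)} (hS : 0 ∉ S) :
    (∀ x ∈ AddSubmonoid.closure S, -x ∈ AddSubmonoid.closure S → x = 0) ↔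
      (0 : ι → ℝ) ∉ convexHull ℝ ((Int.castRingHom ℝ).compLeft ι '' S) := by
  set c := (Int.castRingHom ℝ).compLeft ι
  refine ⟨fun hpt h0 => ?_, fun h0 x hx hnx => ?_⟩
  · obtain ⟨x, hx0, hx, hnx⟩ := exists_ne_zero_mem_closure_neg_mem_of_zero_mem_convexHull hS h0
    exact hx0 (hpt x hx hnx)
  · have hmap : ∀ y ∈ AddSubmonoid.closure S, c y ∈ AddSubmonoid.closure (c '' S) := by
      intro y hy
      rw [← AddMonoidHom.map_mclosure]
      exact ⟨y, hy, rfl⟩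
    by_contra hx0
    refine h0 (zero_mem_convexHull_of_mem_closure_of_neg_mem (hmap x hx) ?_ ?_)
    · simpa using hmap _ hnx
    · exact fun h => hx0 (Int.cast_injective.comp_left (h.trans (map_zero c).symm))

end PointedClosure

theorem stmt_2_general {n : ℕ} (A : Finset (Fin n → ℤ))
    (a : Fin n → ℤ) (ha : a ∈ A)
    (IT : AddSubmonoid (Fin n → ℤ))
    (hIT : IT = AddSubmonoid.closure
      ({v | ∃ a' ∈ A, a' ≠ a ∧ v = a' - a} ∪ Set.range (fun i => Pi.single i (1 : ℤ))))
    (N : Set (Fin n → ℝ))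
    (hN : N = convexHull ℝ
      ((fun (v : Fin n → ℤ) (i : Fin n) => (v i : ℝ)) '' (A : Set (Fin n → ℤ))
        + {x : Fin n → ℝ | ∀ i, 0 ≤ x i})) :
    (∀ x ∈ IT, -x ∈ IT → x = 0) ↔
      (fun i => (a i : ℝ)) ∈ Set.extremePoints ℝ N := by
  subst hIT hN
  refine (closure_pointed_iff_zero_notMem_convexHull
    (zero_notMem_idealTangentGenerators (A : Set (Fin n → ℤ)) a)).trans ?_
  rw [image_idealTangentGenerators _ Int.cast_injective]
  exact (mem_extremePoints_iff_zero_notMem_convexHull_idealTangentGenerators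
    (A.finite_toSet.image _) (Set.mem_image_of_mem _ ha)).symm

/-- For a finite set `A ⊆ ℕⁿ` and `a ∈ A`, the ideal tangent cone
`IT_a = ℕ⟨a' - a : a' ∈ A, a' ≠ a⟩ + ℕ⟨e₁,…,eₙ⟩` is pointed if and only if
`a` is a vertex (extreme point) of the Newton polyhedron `conv(A + ℝ≥0ⁿ)`. -/
theorem stmt_2 {n : ℕ} (A : Finset (Fin n → ℤ)) (hA : ∀ a ∈ A, ∀ i, 0 ≤ a i)
    (a : Fin n → ℤ) (ha : a ∈ A)
    (IT : AddSubmonoid (Fin n → ℤ))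
    (hIT : IT = AddSubmonoid.closure
      ({v | ∃ a' ∈ A, a' ≠ a ∧ v = a' - a} ∪ Set.range (fun i => Pi.single i (1 : ℤ))))
    (N : Set (Fin n → ℝ))
    (hN : N = convexHull ℝ
      ((fun (v : Fin n → ℤ) (i : Fin n) => (v i : ℝ)) '' (A : Set (Fin n → ℤ))
        + {x : Fin n → ℝ | ∀ i, 0 ≤ x i})) :
    (∀ x ∈ IT, -x ∈ IT → x = 0) ↔
      (fun i => (a i : ℝ)) ∈ Set.extremePoints ℝ N :=
  stmt_2_general A a ha IT hIT N hN
end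

section
/- Let A ⊆ ℕ^n be finite and a ∈ A a point that is not a vertex of the Newton polyhedron N = conv(A + ℝ≥0^n). If a' is a vertex of N appearing with positive coefficient in a convex combination of vertices representing a, then IT_{a'} ⊆ IT_a, where IT_b denotes the ideal tangent cone of b (the ℕ-span of {c - b : c ∈ A, c ≠ b} ∪ {e_1,...,e_n}). -/
/-!
The convex combination gives a real relation `∑ w_v (v - a) = 0` with positive coefficients among
the integer vectors `v - a`. Writing the `w_v` in a `ℚ`-basis of the reals they span and perturbing
that basis to rational numbers turns it into a relation `∑ m_v (v - a) = 0` with positive natural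
coefficients. Since no vertex `v` equals the non-vertex `a`, each `v - a` lies in `IT_a`, and solving
for the term of `a'` gives `a - a' = ∑_{v ≠ a'} m_v (v - a) + (m_{a'} - 1) (a' - a) ∈ IT_a`. Hence
every generator `c - a' = (c - a) + (a - a')` of `IT_{a'}` lies in `IT_a`.
-/

open Pointwise Finset

theorem exists_linearIndependent_sum_smul_eq {ι : Type*} (F : Type*) {M : Type*} [DivisionRing F]
    [AddCommGroup M] [Module F M] (s : Finset ι) (w : ι → M) :
    ∃ (d : ℕ) (b : Fin d → M) (q : ι → Fin d → F),
      LinearIndependent F b ∧ ∀ v ∈ s, ∑ j, q v j • b j = w v := by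
  classical
  let E := Submodule.span F (w '' s)
  have : Module.Finite F E := FiniteDimensional.span_of_finite F (s.finite_toSet.image w)
  let B := Module.finBasis F E
  have hwE (v : ι) (hv : v ∈ s) : w v ∈ E := Submodule.subset_span ⟨v, hv, rfl⟩
  refine ⟨_, fun j => B j, fun v j => if hv : v ∈ s then B.repr ⟨w v, hwE v hv⟩ j else 0,
    B.linearIndependent.map' E.subtype E.ker_subtype, fun v hv => ?_⟩
  simp only [hv, dite_true]
  simpa only [Submodule.coe_sum, Submodule.coe_smul] using
    congrArg Subtype.val (B.sum_repr ⟨w v, hwE v hv⟩)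

theorem exists_rat_pos_sum_mul_of_real {ι d : Type*} [Fintype d] (s : Finset ι) (q : ι → d → ℚ)
    (b : d → ℝ) (hb : ∀ v ∈ s, 0 < ∑ j, (q v j : ℝ) * b j) :
    ∃ t : d → ℚ, ∀ v ∈ s, 0 < ∑ j, q v j * t j := by
  let U : Set (d → ℝ) := ⋂ v ∈ s, {y | 0 < ∑ j, (q v j : ℝ) * y j}
  have hU : IsOpen U :=
    s.finite_toSet.isOpen_biInter fun v _ => isOpen_lt continuous_const (by fun_prop)
  have hdense : DenseRange (Pi.map fun (_ : d) (r : ℚ) => (r : ℝ)) :=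
    DenseRange.piMap fun _ => Rat.denseRange_cast
  obtain ⟨t, ht⟩ := hdense.exists_mem_open hU ⟨b, Set.mem_iInter₂.2 hb⟩
  refine ⟨t, fun v hv => ?_⟩
  have htv : (0 : ℝ) < ∑ j, (q v j : ℝ) * t j := Set.mem_iInter₂.1 ht v hv
  exact_mod_cast htv

theorem exists_rat_pos_sum_mul_eq_zero_of_real {ι κ : Type*} (s : Finset ι) (u : ι → κ → ℚ)
    (w : ι → ℝ) (hw : ∀ v ∈ s, 0 < w v) (h : ∀ i, ∑ v ∈ s, w v * u v i = 0) :
    ∃ x : ι → ℚ, (∀ v ∈ s, 0 < x v) ∧ ∀ i, ∑ v ∈ s, x v * u v i = 0 := by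
  obtain ⟨d, b, q, hb, hwq⟩ := exists_linearIndependent_sum_smul_eq ℚ s w
  -- By linear independence of `b`, every coordinate `q · j` of the representation of `w`
  -- is itself a rational solution; the solution sought is a positive combination of them.
  have hq (i : κ) (j : Fin d) : ∑ v ∈ s, q v j * u v i = 0 := by
    refine Fintype.linearIndependent_iff.1 hb (fun j => ∑ v ∈ s, q v j * u v i) ?_ j
    calc ∑ j, (∑ v ∈ s, q v j * u v i) • b j = ∑ v ∈ s, (∑ j, q v j • b j) * u v i := by
          simp only [Finset.sum_smul, Finset.sum_mul, Rat.smul_def, Rat.cast_mul]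
          rw [Finset.sum_comm]
          exact sum_congr rfl fun v _ => sum_congr rfl fun j _ => by ring
      _ = 0 := by rw [← h i]; exact sum_congr rfl fun v hv => by rw [hwq v hv]
  obtain ⟨t, ht⟩ := exists_rat_pos_sum_mul_of_real s q b fun v hv => by
    simpa only [← hwq v hv, Rat.smul_def] using hw v hv
  refine ⟨fun v => ∑ j, q v j * t j, ht, fun i => ?_⟩
  calc ∑ v ∈ s, (∑ j, q v j * t j) * u v i = ∑ j, (∑ v ∈ s, q v j * u v i) * t j := by
        simp only [Finset.sum_mul]
        rw [Finset.sum_comm]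
        exact sum_congr rfl fun j _ => sum_congr rfl fun v _ => by ring
    _ = 0 := by simp only [hq, zero_mul, sum_const_zero]

theorem exists_nat_pos_sum_mul_eq_zero_of_rat {ι κ : Type*} [DecidableEq ι] (s : Finset ι)
    (u : ι → κ → ℤ) (x : ι → ℚ) (hx : ∀ v ∈ s, 0 < x v) (h : ∀ i, ∑ v ∈ s, x v * u v i = 0) :
    ∃ m : ι → ℕ, (∀ v ∈ s, 0 < m v) ∧ ∀ i, ∑ v ∈ s, (m v : ℤ) * u v i = 0 := by
  let D := ∏ v ∈ s, (x v).den
  let m v := (x v).num.natAbs * ∏ y ∈ s.erase v, (x y).den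
  have hm (v : ι) (hv : v ∈ s) : (m v : ℚ) = D * x v := by
    have hnum : ((x v).num.natAbs : ℚ) = (x v).den * x v := by
      rw [Nat.cast_natAbs, abs_of_pos (Rat.num_pos.2 (hx v hv)), Rat.den_mul_eq_num]
    simp only [m, D, Nat.cast_mul, Nat.cast_prod, hnum, ← Finset.mul_prod_erase s _ hv]
    ring
  refine ⟨m, fun v hv => ?_, fun i => ?_⟩
  · exact Nat.mul_pos (Int.natAbs_pos.2 (Rat.num_pos.2 (hx v hv)).ne')
      (Finset.prod_pos fun y _ => (x y).den_pos)
  · have hcast : ((∑ v ∈ s, (m v : ℤ) * u v i : ℤ) : ℚ) = D * ∑ v ∈ s, x v * u v i := by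
      push_cast
      rw [Finset.mul_sum]
      exact sum_congr rfl fun v hv => by rw [hm v hv]; ring
    rw [h i, mul_zero] at hcast
    exact_mod_cast hcast

theorem AddSubmonoid.neg_mem_of_sum_nsmul_eq_zero {G ι : Type*} [AddCommGroup G]
    (S : AddSubmonoid G) {s : Finset ι} {x : ι → G} {m : ι → ℕ} (hx : ∀ v ∈ s, x v ∈ S)
    (hm : ∀ v ∈ s, 0 < m v) (h : ∑ v ∈ s, m v • x v = 0) {j : ι} (hj : j ∈ s) : -x j ∈ S := by
  classical
  obtain ⟨k, hk⟩ := Nat.exists_eq_add_one_of_ne_zero (hm j hj).ne'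
  have hneg : -x j = ∑ v ∈ s.erase j, m v • x v + k • x j := by
    rw [← Finset.sum_erase_add s _ hj, hk, succ_nsmul, ← add_assoc] at h
    exact neg_eq_of_add_eq_zero_left h
  rw [hneg]
  exact add_mem (S.sum_mem fun v hv => nsmul_mem (hx v (mem_of_mem_erase hv)) _)
    (nsmul_mem (hx j hj) _)

def idealTangentCone {n : ℕ} (A : Finset (Fin n → ℤ)) (b : Fin n → ℤ) :
    AddSubmonoid (Fin n → ℤ) :=
  AddSubmonoid.closure ({v | ∃ c ∈ A, c ≠ b ∧ v = c - b} ∪ Set.range fun i => Pi.single i 1)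

section idealTangentCone

variable {n : ℕ} {A : Finset (Fin n → ℤ)} {a a' : Fin n → ℤ}

theorem sub_mem_idealTangentCone {c : Fin n → ℤ} (hc : c ∈ A) (hca : c ≠ a) :
    c - a ∈ idealTangentCone A a :=
  AddSubmonoid.subset_closure (Or.inl ⟨c, hc, hca, rfl⟩)

theorem idealTangentCone_le_of_sub_mem (h : a - a' ∈ idealTangentCone A a) :
    idealTangentCone A a' ≤ idealTangentCone A a := by
  refine AddSubmonoid.closure_le.2 ?_
  rintro _ (⟨c, hc, -, rfl⟩ | hunit)
  · obtain rfl | hca := eq_or_ne c a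
    · exact h
    · rw [← sub_add_sub_cancel c a a']
      exact add_mem (sub_mem_idealTangentCone hc hca) h
  · exact AddSubmonoid.subset_closure (Or.inr hunit)

end idealTangentCone

theorem stmt_3_general {n : ℕ} (A : Finset (Fin n → ℤ))
    (a a' : Fin n → ℤ)
    (N : Set (Fin n → ℝ))
    (hnotvert : (fun i => (a i : ℝ)) ∉ Set.extremePoints ℝ N)
    (V : Finset (Fin n → ℤ)) (hVA : V ⊆ A)
    (hVvert : ∀ v ∈ V, (fun i => (v i : ℝ)) ∈ Set.extremePoints ℝ N)
    (w : (Fin n → ℤ) → ℝ) (hwpos : ∀ v ∈ V, 0 < w v) (hwsum : ∑ v ∈ V, w v = 1)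
    (hcomb : ∑ v ∈ V, w v • (fun i => ((v i : ℝ))) = (fun i => (a i : ℝ)))
    (ha'V : a' ∈ V) :
    AddSubmonoid.closure
        ({v | ∃ c ∈ A, c ≠ a' ∧ v = c - a'} ∪ Set.range (fun i => Pi.single i (1 : ℤ)))
      ≤ AddSubmonoid.closure
        ({v | ∃ c ∈ A, c ≠ a ∧ v = c - a} ∪ Set.range (fun i => Pi.single i (1 : ℤ))) := by
  have hVa : ∀ v ∈ V, v ≠ a := by
    rintro v hv rfl
    exact hnotvert (hVvert v hv)
  have hrel (i : Fin n) : ∑ v ∈ V, w v * (((v i - a i : ℤ) : ℚ) : ℝ) = 0 := by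
    have hi := congrFun hcomb i
    simp only [Finset.sum_apply, Pi.smul_apply, smul_eq_mul] at hi
    push_cast
    simp only [mul_sub, sum_sub_distrib, ← sum_mul, hi, hwsum, one_mul, sub_self]
  obtain ⟨x, hxpos, hx⟩ := exists_rat_pos_sum_mul_eq_zero_of_real V _ w hwpos hrel
  obtain ⟨m, hmpos, hm⟩ :=
    exists_nat_pos_sum_mul_eq_zero_of_rat V (fun v i => v i - a i) x hxpos hx
  have hsum : ∑ v ∈ V, m v • (v - a) = 0 := by
    funext i
    simp only [Finset.sum_apply, Pi.smul_apply, Pi.sub_apply, Pi.zero_apply]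
    simpa only [nsmul_eq_mul] using hm i
  have hkey : a - a' ∈ idealTangentCone A a := by
    simpa only [neg_sub] using (idealTangentCone A a).neg_mem_of_sum_nsmul_eq_zero
      (fun v hv => sub_mem_idealTangentCone (hVA hv) (hVa v hv)) hmpos hsum ha'V
  exact idealTangentCone_le_of_sub_mem hkey

/-- If `a ∈ A` is not a vertex of the Newton polyhedron `N = conv(A + ℝ≥0ⁿ)`, and `a'`
is a vertex of `N` appearing with positive coefficient in a convex combination of
vertices representing `a`, then `IT_{a'} ⊆ IT_a`. -/
theorem stmt_3 {n : ℕ} (A : Finset (Fin n → ℤ)) (hA : ∀ a ∈ A, ∀ i, 0 ≤ a i)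
    (a a' : Fin n → ℤ) (ha : a ∈ A) (ha' : a' ∈ A)
    (N : Set (Fin n → ℝ))
    (hN : N = convexHull ℝ
      ((fun (v : Fin n → ℤ) (i : Fin n) => (v i : ℝ)) '' (A : Set (Fin n → ℤ))
        + {x : Fin n → ℝ | ∀ i, 0 ≤ x i}))
    (hnotvert : (fun i => (a i : ℝ)) ∉ Set.extremePoints ℝ N)
    (V : Finset (Fin n → ℤ)) (hVA : V ⊆ A)
    (hVvert : ∀ v ∈ V, (fun i => (v i : ℝ)) ∈ Set.extremePoints ℝ N)
    (w : (Fin n → ℤ) → ℝ) (hwpos : ∀ v ∈ V, 0 < w v) (hwsum : ∑ v ∈ V, w v = 1)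
    (hcomb : ∑ v ∈ V, w v • (fun i => ((v i : ℝ))) = (fun i => (a i : ℝ)))
    (ha'V : a' ∈ V) :
    AddSubmonoid.closure
        ({v | ∃ c ∈ A, c ≠ a' ∧ v = c - a'} ∪ Set.range (fun i => Pi.single i (1 : ℤ)))
      ≤ AddSubmonoid.closure
        ({v | ∃ c ∈ A, c ≠ a ∧ v = c - a} ∪ Set.range (fun i => Pi.single i (1 : ℤ))) :=
  stmt_3_general A a a' N hnotvert V hVA hVvert w hwpos hwsum hcomb ha'V
end

section
/- The kernel of the ring homomorphism K[t_1,...,t_l] → K[x_1^{±1},...,x_n^{±1}] sending t_i to x^{v_i} (for given vectors v_1,...,v_l ∈ ℤ^n) is generated, as an ideal, by binomials of the form t^α - t^β with α, β ∈ ℕ^l satisfying Σ α_i v_i = Σ β_i v_i. -/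
/-!
The monomial map `t^α ↦ x^{Σ αᵢ vᵢ}` is the push-forward `f_*` of monoid algebras along the
additive map `f : α ↦ Σ αᵢ vᵢ`. For any map `f` with a section `s` over its image, every `x`
differs from `(s ∘ f)_* x` by a linear combination of binomials `t^a - t^{s (f a)}`, and
`(s ∘ f)_* x = s_* (f_* x)` vanishes when `x` lies in the kernel of `f_*`.
-/

open Function

namespace AddMonoidAlgebra

variable {R M N : Type*}

lemma mapDomain_comp [Semiring R] {O : Type*} (f : M → N) (g : N → O) (x : R[M]) :
    mapDomain (g ∘ f) x = mapDomain g (mapDomain f x) := by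
  ext; simp [Finsupp.mapDomain_comp]

theorem mem_span_of_mapDomain_eq_zero [Ring R] [Nonempty M] {f : M → N} {x : R[M]}
    (hx : mapDomain f x = 0) :
    x ∈ Submodule.span R {y : R[M] | ∃ a b, f a = f b ∧ y = single a 1 - single b 1} := by
  set g : M → M := invFun f ∘ f
  have key : ∀ y : R[M], y - mapDomain g y ∈
      Submodule.span R {y : R[M] | ∃ a b, f a = f b ∧ y = single a 1 - single b 1} := by
    intro y
    induction y using induction_linear with
    | zero => simp
    | add y z hy hz => simpa [mapDomain_add, add_sub_add_comm] using add_mem hy hz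
    | single a c =>
      have hga : f a = f (g a) := (invFun_eq ⟨a, rfl⟩).symm
      rw [mapDomain_single, show single a c - single (g a) c = c • (single a 1 - single (g a) 1)
        by simp [smul_sub]]
      exact Submodule.smul_mem _ _ (Submodule.subset_span ⟨a, g a, hga, rfl⟩)
  simpa [g, mapDomain_comp, hx] using key x

theorem ker_mapDomainRingHom [Ring R] [AddMonoid M] [AddMonoid N] (f : M →+ N) :
    RingHom.ker (mapDomainRingHom R f) =
      Ideal.span {y : R[M] | ∃ a b, f a = f b ∧ y = single a 1 - single b 1} := by
  refine le_antisymm (fun x hx => ?_) (Ideal.span_le.2 ?_)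
  · exact Submodule.span_le_restrictScalars R R[M] _ (mem_span_of_mapDomain_eq_zero hx)
  · rintro _ ⟨a, b, hab, rfl⟩
    rw [SetLike.mem_coe, RingHom.mem_ker, map_sub, mapDomainRingHom_apply, mapDomainRingHom_apply,
      mapDomain_single, mapDomain_single, hab, sub_self]

end AddMonoidAlgebra

namespace MvPolynomial

theorem aeval_of'_eq_mapDomainAlgHom {σ R M : Type*} [CommSemiring R] [AddCommMonoid M]
    (v : σ → M) :
    aeval (fun i => AddMonoidAlgebra.of' R M (v i)) =
      AddMonoidAlgebra.mapDomainAlgHom R R (Finsupp.weight v) := by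
  refine algHom_ext fun i => ?_
  rw [aeval_X, AddMonoidAlgebra.mapDomainAlgHom_apply, X, ← single_eq_monomial,
    AddMonoidAlgebra.mapDomain_single, Finsupp.weight_single, one_smul]
  rfl

end MvPolynomial

/-- The kernel of the `K`-algebra map `K[t₁,…,t_l] → K[x₁^{±1},…,xₙ^{±1}]`, sending
`tᵢ` to the Laurent monomial `x^{vᵢ}`, is generated as an ideal by the binomials
`t^α - t^β` with `Σ αᵢ vᵢ = Σ βᵢ vᵢ`. -/
theorem stmt_4 {l n : ℕ} (K : Type*) [Field K] (v : Fin l → (Fin n → ℤ)) :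
    RingHom.ker ((MvPolynomial.aeval
        (fun i => AddMonoidAlgebra.of' K (Fin n → ℤ) (v i)) :
        MvPolynomial (Fin l) K →ₐ[K] AddMonoidAlgebra K (Fin n → ℤ)).toRingHom) =
      Ideal.span {p : MvPolynomial (Fin l) K |
        ∃ α β : Fin l →₀ ℕ, (∑ i, (α i : ℤ) • v i) = (∑ i, (β i : ℤ) • v i) ∧
          p = MvPolynomial.monomial α (1 : K) - MvPolynomial.monomial β (1 : K)} := by
  rw [MvPolynomial.aeval_of'_eq_mapDomainAlgHom]
  refine (AddMonoidAlgebra.ker_mapDomainRingHom (Finsupp.weight v)).trans (congrArg Ideal.span ?_)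
  simp only [Finsupp.weight_eq_sum, natCast_zsmul, MvPolynomial.single_eq_monomial]
end

section
/- Let I, J ⊆ {1,...,n} with I ⊆ J and J = {1,...,n}. Then every vertex v of the Newton polyhedron of the product of coordinate ideals (x_i : i ∈ I)·(x_j : j ∈ J) has a simplicial ideal tangent cone, i.e., the minimal generating set of IT_v has exactly n elements forming a ℤ-basis of ℤ^n. -/
open Pointwise

/-!
Write `v = e_i + e_j` with `i ∈ I`. If `j ∈ I` and `j ≠ i`, then `v` is the midpoint of
`2 e_i` and `2 e_j`, both in the Newton polyhedron, so it is not a vertex; hence `j = i` or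
`j ∉ I`. In either case the ideal tangent cone is generated by the `n` vectors
`e_j`, `e_k - e_i` (`k ∈ I`, `k ≠ i`, `k ≠ j`) and `e_k - e_j` (all other `k ≠ j`):
each is some `c - v` or a unit vector, and conversely every `e_a + e_b - v` splits as
`(e_a - e_i) + (e_b - e_j)` with both summands in the monoid they generate. In particular these
`n` vectors span `ℤⁿ`, so they are linearly independent (a surjective endomorphism of `ℤⁿ` is
injective), which also makes each of them irredundant.
-/

theorem LinearIndepOn.notMem_addSubmonoidClosure_erase {R M : Type*} [Ring R] [Nontrivial R]
    [AddCommGroup M] [Module R M] [DecidableEq M] {S : Finset M}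
    (hS : LinearIndepOn R id (S : Set M)) {s : M} (hs : s ∈ S) :
    s ∉ AddSubmonoid.closure (S.erase s : Set M) := fun h ↦
  hS.notMem_span (v := id) hs <| by
    simpa using Submodule.closure_subset_span (R := R) h

theorem linearIndependent_of_span_eq_top {R ι : Type*} [CommRing R] [Nontrivial R] [Fintype ι]
    {b : ι → ι → R} (hb : Submodule.span R (Set.range b) = ⊤) : LinearIndependent R b :=
  linearIndependent_of_top_le_span_of_card_eq_finrank hb.ge
    (Module.finrank_fintype_fun_eq_card R).symm

theorem eq_of_midpoint_mem_extremePoints {E : Type*} [AddCommGroup E] [Module ℝ E] {A : Set E}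
    {x y : E} (hx : x ∈ A) (hy : y ∈ A) (h : midpoint ℝ x y ∈ A.extremePoints ℝ) : x = y := by
  have hxy := (mem_extremePoints.1 h).2 x hx y hy (midpoint_mem_openSegment x y)
  exact hxy.1.trans hxy.2.symm

theorem Pi.single_one_injective {ι R : Type*} [DecidableEq ι] [Zero R] [One R] [NeZero (1 : R)] :
    Function.Injective fun k : ι ↦ (Pi.single k 1 : ι → R) := fun k l hkl ↦ by
  by_contra hne
  simpa [Pi.single_apply, hne] using congrFun hkl k

section NewtonPolyhedron

variable {n : ℕ}

def productCloud (I : Finset (Fin n)) : Set (Fin n → ℤ) :=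
  {x | ∃ i ∈ I, ∃ j : Fin n, x = Pi.single i (1 : ℤ) + Pi.single j 1}

def newtonPolyhedron (C : Set (Fin n → ℤ)) : Set (Fin n → ℝ) :=
  convexHull ℝ ((fun (x : Fin n → ℤ) (i : Fin n) => (x i : ℝ)) '' C + {x | ∀ i, 0 ≤ x i})

def tangentConeGenerators (C : Set (Fin n → ℤ)) (v : Fin n → ℤ) : Set (Fin n → ℤ) :=
  {w | ∃ x ∈ C, x ≠ v ∧ w = x - v} ∪ Set.range (fun i => Pi.single i (1 : ℤ))

theorem cast_mem_newtonPolyhedron {C : Set (Fin n → ℤ)} {x : Fin n → ℤ} (hx : x ∈ C) :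
    (fun i => (x i : ℝ)) ∈ newtonPolyhedron C :=
  subset_convexHull ℝ _ <| by
    simpa using Set.add_mem_add (Set.mem_image_of_mem _ hx)
      (show (0 : Fin n → ℝ) ∈ {x : Fin n → ℝ | ∀ i, 0 ≤ x i} from fun _ ↦ le_rfl)

theorem eq_of_single_add_single_mem_extremePoints {I : Finset (Fin n)} {i j : Fin n}
    (hi : i ∈ I) (hj : j ∈ I)
    (hv : (fun k => ((Pi.single i 1 + Pi.single j 1 : Fin n → ℤ) k : ℝ)) ∈
      (newtonPolyhedron (productCloud I)).extremePoints ℝ) : i = j := by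
  have hxy := eq_of_midpoint_mem_extremePoints
    (cast_mem_newtonPolyhedron (C := productCloud I) (x := Pi.single i 1 + Pi.single i 1)
      ⟨i, hi, i, rfl⟩)
    (cast_mem_newtonPolyhedron (C := productCloud I) (x := Pi.single j 1 + Pi.single j 1)
      ⟨j, hj, j, rfl⟩)
    (by convert hv using 1; ext k; simp [midpoint_eq_smul_add]; ring)
  by_contra hij
  simpa [Pi.single_apply, hij] using congrFun hxy i

/-- Edges `k → i` and `k → j` of a tree rooted at `j`, together with `e_j`. -/
def tangentBasis (I : Finset (Fin n)) (i j k : Fin n) : Fin n → ℤ :=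
  if k = j then Pi.single j 1
  else if k ∈ I ∧ k ≠ i then Pi.single k 1 - Pi.single i 1
  else Pi.single k 1 - Pi.single j 1

section TangentBasis

variable {I : Finset (Fin n)} {i j : Fin n}

theorem tangentBasis_mem_tangentConeGenerators (hi : i ∈ I) (k : Fin n) :
    tangentBasis I i j k ∈
      tangentConeGenerators (productCloud I) (Pi.single i 1 + Pi.single j 1) := by
  unfold tangentBasis
  split_ifs with hkj hk
  · exact Or.inr ⟨j, rfl⟩
  · refine Or.inl ⟨Pi.single k 1 + Pi.single j 1, ⟨k, hk.1, j, rfl⟩, ?_, by abel⟩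
    simpa [Pi.single_one_injective.eq_iff] using hk.2
  · refine Or.inl ⟨Pi.single i 1 + Pi.single k 1, ⟨i, hi, k, rfl⟩, ?_, by abel⟩
    simpa [Pi.single_one_injective.eq_iff] using hkj

local notation "M" => AddSubmonoid.closure (Set.range (tangentBasis I i j))

theorem single_sub_single_mem_closure_of_mem (hij : j = i ∨ j ∉ I) {a : Fin n} (ha : a ∈ I) :
    Pi.single a 1 - Pi.single i 1 ∈ M := by
  by_cases hai : a = i
  · simp [hai]
  have haj : a ≠ j := by rintro rfl; exact hij.elim hai (· ha)
  exact AddSubmonoid.subset_closure ⟨a, by simp [tangentBasis, haj, ha, hai]⟩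

theorem single_sub_single_root_mem_closure (hij : j = i ∨ j ∉ I) (b : Fin n) :
    Pi.single b 1 - Pi.single j 1 ∈ M := by
  have hi : Pi.single i 1 - Pi.single j 1 ∈ M := by
    by_cases hij' : i = j
    · simp [hij']
    exact AddSubmonoid.subset_closure ⟨i, by simp [tangentBasis, hij']⟩
  by_cases hbj : b = j
  · simp [hbj]
  by_cases hb : b ∈ I ∧ b ≠ i
  · simpa using add_mem (single_sub_single_mem_closure_of_mem hij hb.1) hi
  · exact AddSubmonoid.subset_closure ⟨b, by simp [tangentBasis, hbj, hb]⟩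

theorem single_mem_closure (hij : j = i ∨ j ∉ I) (l : Fin n) : Pi.single l 1 ∈ M := by
  have hj : Pi.single j 1 ∈ M := AddSubmonoid.subset_closure ⟨j, by simp [tangentBasis]⟩
  simpa using add_mem (single_sub_single_root_mem_closure hij l) hj

theorem closure_range_tangentBasis (hi : i ∈ I) (hij : j = i ∨ j ∉ I) :
    M = AddSubmonoid.closure
      (tangentConeGenerators (productCloud I) (Pi.single i 1 + Pi.single j 1)) := by
  refine le_antisymm (AddSubmonoid.closure_mono ?_) (AddSubmonoid.closure_le.2 ?_)
  · rintro _ ⟨k, rfl⟩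
    exact tangentBasis_mem_tangentConeGenerators hi k
  · rintro _ (⟨_, ⟨a, ha, b, rfl⟩, -, rfl⟩ | ⟨l, rfl⟩)
    · have hsplit : Pi.single a 1 + Pi.single b 1 - (Pi.single i 1 + Pi.single j 1) =
          (Pi.single a 1 - Pi.single i 1) + (Pi.single b 1 - Pi.single j 1 : Fin n → ℤ) := by
        abel
      rw [SetLike.mem_coe, hsplit]
      exact add_mem (single_sub_single_mem_closure_of_mem hij ha)
        (single_sub_single_root_mem_closure hij b)
    · exact single_mem_closure hij l

theorem span_range_tangentBasis (hij : j = i ∨ j ∉ I) :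
    Submodule.span ℤ (Set.range (tangentBasis I i j)) = ⊤ := by
  rw [eq_top_iff, ← (Pi.basisFun ℤ (Fin n)).span_eq, Submodule.span_le]
  rintro _ ⟨l, rfl⟩
  exact Submodule.closure_subset_span (by simpa using single_mem_closure hij l)

end TangentBasis

end NewtonPolyhedron

theorem stmt_14_general {n : ℕ} (I : Finset (Fin n))
    (C : Set (Fin n → ℤ))
    (hC : C = {x | ∃ i ∈ I, ∃ j : Fin n, x = Pi.single i (1 : ℤ) + Pi.single j 1})
    (v : Fin n → ℤ) (hvC : v ∈ C)
    (hvert : (fun i => (v i : ℝ)) ∈ Set.extremePoints ℝ (convexHull ℝ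
      ((fun (x : Fin n → ℤ) (i : Fin n) => (x i : ℝ)) '' C
        + {x : Fin n → ℝ | ∀ i, 0 ≤ x i}))) :
    ∃ S : Finset (Fin n → ℤ), S.card = n ∧
      AddSubmonoid.closure (S : Set (Fin n → ℤ)) = AddSubmonoid.closure
        ({w | ∃ x ∈ C, x ≠ v ∧ w = x - v} ∪ Set.range (fun i => Pi.single i (1 : ℤ))) ∧
      (∀ s ∈ S, s ∉ AddSubmonoid.closure ((S.erase s : Finset (Fin n → ℤ)) : Set (Fin n → ℤ))) ∧
      Submodule.span ℤ (S : Set (Fin n → ℤ)) = ⊤ ∧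
      LinearIndependent ℤ (fun x : {x // x ∈ S} => (x : Fin n → ℤ)) := by
  classical
  subst hC
  obtain ⟨i, hi, j, rfl⟩ := hvC
  have hij : j = i ∨ j ∉ I := by
    by_contra! h
    exact h.1 (eq_of_single_add_single_mem_extremePoints hi h.2 hvert).symm
  set S := Finset.univ.image (tangentBasis I i j)
  have hS : (S : Set (Fin n → ℤ)) = Set.range (tangentBasis I i j) := Fintype.coe_image_univ
  have hindep := linearIndependent_of_span_eq_top (span_range_tangentBasis hij)
  have hindepOn : LinearIndepOn ℤ id (S : Set (Fin n → ℤ)) := hindep.linearIndepOn_id' hS.symm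
  refine ⟨S, ?_, ?_, fun s hs ↦ hindepOn.notMem_addSubmonoidClosure_erase hs, ?_, hindepOn⟩
  · rw [Finset.card_image_of_injective _ hindep.injective, Finset.card_fin]
  · rw [hS]
    exact closure_range_tangentBasis hi hij
  · rw [hS, span_range_tangentBasis hij]

/-- For coordinate ideals with index sets `I ⊆ J = {1,…,n}`, every vertex of the
Newton polyhedron of the product has a simplicial ideal tangent cone: its (unique)
minimal generating set has exactly `n` elements and forms a ℤ-basis of `ℤⁿ`. -/
theorem stmt_14 {n : ℕ} (I : Finset (Fin n)) (hI : I.Nonempty)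
    (C : Set (Fin n → ℤ))
    (hC : C = {x | ∃ i ∈ I, ∃ j : Fin n, x = Pi.single i (1 : ℤ) + Pi.single j 1})
    (v : Fin n → ℤ) (hvC : v ∈ C)
    (hvert : (fun i => (v i : ℝ)) ∈ Set.extremePoints ℝ (convexHull ℝ
      ((fun (x : Fin n → ℤ) (i : Fin n) => (x i : ℝ)) '' C
        + {x : Fin n → ℝ | ∀ i, 0 ≤ x i}))) :
    ∃ S : Finset (Fin n → ℤ), S.card = n ∧
      AddSubmonoid.closure (S : Set (Fin n → ℤ)) = AddSubmonoid.closure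
        ({w | ∃ x ∈ C, x ≠ v ∧ w = x - v} ∪ Set.range (fun i => Pi.single i (1 : ℤ))) ∧
      (∀ s ∈ S, s ∉ AddSubmonoid.closure ((S.erase s : Finset (Fin n → ℤ)) : Set (Fin n → ℤ))) ∧
      Submodule.span ℤ (S : Set (Fin n → ℤ)) = ⊤ ∧
      LinearIndependent ℤ (fun x : {x // x ∈ S} => (x : Fin n → ℤ)) :=
  stmt_14_general I C hC v hvC hvert
end

section
/- Every vertex of the Newton polyhedron of the permutohedral ideal I_{n,2} = ∏_{1≤i<j≤n}(x_i, x_j) is a permutation of the vector (n-1, n-2, ..., 1, 0). Equivalently: the extreme points of conv(C + ℝ≥0^n), where C is the set of all vectors obtainable by choosing for each pair {i,j} one of e_i, e_j and summing, are exactly the n! permutations of (n-1, ..., 1, 0). -/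
/-!
An extreme point of `conv (C + ℝ≥0ⁿ)` lies in `C`, because adding a nonzero nonnegative vector
puts it in the middle of a segment. It is then the score vector of an orientation of `Kₙ`. If that
orientation had a directed triangle `a → b → c → a`, reversing each of its three edges separately
would give three points of `C` with the given point as centroid. So the tournament is transitive,
its out-neighbourhoods are strictly nested, and its scores are `n - 1, …, 1, 0` in some order.

Conversely, the transitive tournament of `σ` orients every edge away from the endpoint of smaller
weight `σ i + 1`, so its score vector is the unique minimiser over `C + ℝ≥0ⁿ` of the positive
functional `y ↦ ∑ᵢ (σ i + 1) yᵢ`, hence extreme.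
-/

open Pointwise

section Convex

variable {𝕜 E : Type*} [Field 𝕜] [LinearOrder 𝕜] [IsStrictOrderedRing 𝕜] [AddCommGroup E]
  [Module 𝕜 E]

theorem convex_insert_halfSpace_gt (ℓ : E →ₗ[𝕜] 𝕜) (v : E) :
    Convex 𝕜 (insert v {y | ℓ v < ℓ y}) := by
  refine convex_iff_openSegment_subset.2 fun y hy z hz => ?_
  rcases hy with rfl | hy <;> rcases hz with rfl | hz
  · simp
  all_goals
    rintro _ ⟨a, b, ha, hb, hab, rfl⟩
    refine Or.inr ?_
    simp only [Set.mem_ofPred_eq, map_add, map_smul, smul_eq_mul] at *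
    obtain rfl : b = 1 - a := by linear_combination hab
    nlinarith

theorem mem_extremePoints_insert_halfSpace_gt (ℓ : E →ₗ[𝕜] 𝕜) (v : E) :
    v ∈ (insert v {y | ℓ v < ℓ y}).extremePoints 𝕜 := by
  rw [(convex_insert_halfSpace_gt ℓ v).mem_extremePoints_iff_convex_sdiff,
    Set.insert_sdiff_self_of_notMem (s := {y | ℓ v < ℓ y}) (lt_irrefl (ℓ v))]
  exact ⟨Set.mem_insert _ _, convex_halfSpace_gt ℓ.isLinear _⟩

theorem mem_extremePoints_convexHull_of_forall_lt {S : Set E} {v : E} (ℓ : E →ₗ[𝕜] 𝕜)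
    (hv : v ∈ S) (hlt : ∀ y ∈ S, y ≠ v → ℓ v < ℓ y) :
    v ∈ (convexHull 𝕜 S).extremePoints 𝕜 := by
  have hS : convexHull 𝕜 S ⊆ insert v {y | ℓ v < ℓ y} :=
    convexHull_min (fun y hy => (eq_or_ne y v).imp id (hlt y hy))
      (convex_insert_halfSpace_gt ℓ v)
  exact inter_extremePoints_subset_extremePoints_of_subset hS
    ⟨subset_convexHull 𝕜 S hv, mem_extremePoints_insert_halfSpace_gt ℓ v⟩

theorem extremePoints_convexHull_add_Ici_subset [PartialOrder E] [IsOrderedAddMonoid E]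
    (C : Set E) : (convexHull 𝕜 (C + Set.Ici 0)).extremePoints 𝕜 ⊆ C := by
  intro x hx
  obtain ⟨c, hc, q, hq, rfl⟩ := extremePoints_convexHull_subset hx
  have hc' : c ∈ convexHull 𝕜 (C + Set.Ici 0) :=
    subset_convexHull 𝕜 _ ⟨c, hc, 0, le_rfl, add_zero c⟩
  have hcq : c + (q + q) ∈ convexHull 𝕜 (C + Set.Ici 0) :=
    subset_convexHull 𝕜 _ (Set.add_mem_add hc (add_nonneg hq hq))
  have hseg : c + q ∈ openSegment 𝕜 c (c + (q + q)) :=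
    ⟨1 / 2, 1 / 2, by norm_num, by norm_num, by norm_num, by module⟩
  rwa [← hx.2 hc' hcq hseg]

theorem Convex.eq_of_mem_extremePoints_of_add_add_eq {A : Set E} {x y₁ y₂ y₃ : E}
    (hA : Convex 𝕜 A) (hx : x ∈ A.extremePoints 𝕜) (h₁ : y₁ ∈ A) (h₂ : y₂ ∈ A) (h₃ : y₃ ∈ A)
    (h : y₁ + y₂ + y₃ = (3 : 𝕜) • x) : y₁ = x := by
  have hm : (1 / 2 : 𝕜) • y₂ + (1 / 2 : 𝕜) • y₃ ∈ A :=
    hA h₂ h₃ (by norm_num) (by norm_num) (by norm_num)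
  have hseg : x ∈ openSegment 𝕜 y₁ ((1 / 2 : 𝕜) • y₂ + (1 / 2 : 𝕜) • y₃) := by
    refine ⟨1 / 3, 2 / 3, by norm_num, by norm_num, by norm_num, ?_⟩
    have hx3 : x = (1 / 3 : 𝕜) • (y₁ + y₂ + y₃) := by rw [h]; module
    rw [hx3]; module
  exact hx.2 h₁ hm hseg

end Convex

theorem Fintype.linearCombination_pos {ι R : Type*} [Fintype ι] [Semiring R]
    [PartialOrder R] [IsStrictOrderedRing R] {w q : ι → R} (hw : ∀ i, 0 < w i) (hq : 0 < q) :
    0 < Fintype.linearCombination R w q := by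
  obtain ⟨hq, i, hi⟩ := Pi.lt_def.1 hq
  rw [Fintype.linearCombination_apply]
  exact Finset.sum_pos' (fun j _ => smul_nonneg (hq j) (hw j).le)
    ⟨i, Finset.mem_univ i, smul_pos hi (hw i)⟩

namespace Tournament

open Finset

variable {n : ℕ}

abbrev Edge (n : ℕ) := {p : Fin n × Fin n // p.1 < p.2}

namespace Edge

def Joins (e : Edge n) (i j : Fin n) : Prop := e.1 = (i, j) ∨ e.1 = (j, i)

def other (e : Edge n) (i : Fin n) : Fin n := if e.1.1 = i then e.1.2 else e.1.1

variable {e e' : Edge n} {i j : Fin n}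

theorem Joins.symm (h : e.Joins i j) : e.Joins j i := Or.symm h

theorem Joins.ne (h : e.Joins i j) : i ≠ j := by
  have he := e.2
  rcases h with h | h <;> rw [h] at he
  exacts [he.ne, he.ne']

theorem Joins.unique (h : e.Joins i j) (h' : e'.Joins i j) : e = e' := by
  have he := e.2
  have he' := e'.2
  rcases h with h | h <;> rcases h' with h' | h' <;> rw [h] at he <;> rw [h'] at he'
  · exact Subtype.ext (h.trans h'.symm)
  · exact absurd he he'.asymm
  · exact absurd he he'.asymm
  · exact Subtype.ext (h.trans h'.symm)

theorem exists_joins (h : i ≠ j) : ∃ e : Edge n, e.Joins i j := by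
  rcases h.lt_or_gt with h | h
  exacts [⟨⟨(i, j), h⟩, Or.inl rfl⟩, ⟨⟨(j, i), h⟩, Or.inr rfl⟩]

theorem joins_other (h : i = e.1.1 ∨ i = e.1.2) : e.Joins i (e.other i) := by
  unfold Joins other
  split_ifs with h₁
  · exact Or.inl (Prod.ext h₁ rfl)
  · exact Or.inr (Prod.ext rfl (h.resolve_left (Ne.symm h₁)).symm)

theorem Joins.other_eq (h : e.Joins i j) : e.other i = j := by
  have hij := h.ne
  unfold other
  rcases h with h | h <;> simp [h, hij.symm]

end Edge

def IsOrientation (f : Edge n → Fin n) : Prop := ∀ e, f e = e.1.1 ∨ f e = e.1.2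

def Beats (f : Edge n → Fin n) (i j : Fin n) : Prop := ∃ e : Edge n, e.Joins i j ∧ f e = i

instance (f : Edge n → Fin n) : DecidableRel (Beats f) := fun i j =>
  inferInstanceAs (Decidable (∃ e : Edge n, (e.1 = (i, j) ∨ e.1 = (j, i)) ∧ f e = i))

def score (f : Edge n → Fin n) (i : Fin n) : ℕ := #{e | f e = i}

variable {f : Edge n → Fin n} {i j k : Fin n}

theorem IsOrientation.eq_or_eq {e : Edge n} (hf : IsOrientation f) (he : e.Joins i j) :
    f e = i ∨ f e = j := by
  rcases he with h | h <;> rcases hf e with h' | h' <;> simp_all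

theorem IsOrientation.update (hf : IsOrientation f) {e : Edge n} (he : e.Joins i j) :
    IsOrientation (Function.update f e j) := by
  intro e'
  rcases eq_or_ne e' e with rfl | hne
  · rcases he with h | h <;> simp [h]
  · simpa [Function.update_of_ne hne] using hf e'

theorem Beats.ne (h : Beats f i j) : i ≠ j :=
  let ⟨_, he, _⟩ := h
  he.ne

theorem Beats.not_beats (h : Beats f i j) : ¬ Beats f j i := by
  rintro ⟨e', he', hfe'⟩
  obtain ⟨e, he, hfe⟩ := h
  rw [he'.symm.unique he, hfe] at hfe'
  exact he.ne hfe'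

theorem IsOrientation.beats_or_beats (hf : IsOrientation f) (h : i ≠ j) :
    Beats f i j ∨ Beats f j i := by
  obtain ⟨e, he⟩ := Edge.exists_joins h
  exact (hf.eq_or_eq he).imp (fun hi => ⟨e, he, hi⟩) fun hj => ⟨e, he.symm, hj⟩

theorem IsOrientation.card_beats (hf : IsOrientation f) (i : Fin n) :
    #{j | Beats f i j} = score f i := by
  symm
  refine card_bij (fun e _ => e.other i) ?_ ?_ ?_
  · intro e he
    have he : f e = i := (mem_filter.1 he).2
    have hjoin := Edge.joins_other (i := i) (he ▸ hf e)
    exact mem_filter.2 ⟨mem_univ _, e, hjoin, he⟩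
  · intro e he e' he' heq
    have he : f e = i := (mem_filter.1 he).2
    have he' : f e' = i := (mem_filter.1 he').2
    refine (Edge.joins_other (he ▸ hf e)).unique ?_
    rw [heq]
    exact Edge.joins_other (he' ▸ hf e')
  · intro j hj
    obtain ⟨e, he, hfe⟩ := (mem_filter.1 hj).2
    exact ⟨e, mem_filter.2 ⟨mem_univ _, hfe⟩, he.other_eq⟩

theorem IsOrientation.score_lt (hf : IsOrientation f) (i : Fin n) : score f i < n := by
  rw [← hf.card_beats]
  simpa using card_lt_univ_of_notMem (x := i) (by simpa using fun h : Beats f i i => h.ne rfl)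

theorem IsOrientation.score_lt_score (hf : IsOrientation f)
    (hcyc : ∀ a b c, Beats f a b → Beats f b c → ¬ Beats f c a) (hij : Beats f i j) :
    score f j < score f i := by
  rw [← hf.card_beats, ← hf.card_beats]
  refine card_lt_card ((ssubset_iff_of_subset fun k hk => ?_).2 ⟨j, ?_, ?_⟩)
  · have hjk : Beats f j k := (mem_filter.1 hk).2
    have hik : i ≠ k := by
      rintro rfl
      exact hij.not_beats hjk
    refine mem_filter.2 ⟨mem_univ _, (hf.beats_or_beats hik).resolve_right (hcyc i j k hij hjk)⟩
  · simpa using hij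
  · simpa using fun h : Beats f j j => h.ne rfl

theorem IsOrientation.exists_perm_score (hf : IsOrientation f)
    (hcyc : ∀ a b c, Beats f a b → Beats f b c → ¬ Beats f c a) :
    ∃ σ : Equiv.Perm (Fin n), ∀ i, (score f i : ℤ) = n - 1 - σ i := by
  let d : Fin n → Fin n := fun i => ⟨score f i, hf.score_lt i⟩
  have hd : Function.Injective d := by
    intro i j hij
    by_contra hne
    have hij : score f i = score f j := congrArg Fin.val hij
    rcases hf.beats_or_beats hne with h | h
    · exact (hf.score_lt_score hcyc h).ne' hij
    · exact (hf.score_lt_score hcyc h).ne hij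
  refine ⟨(Equiv.ofBijective d (Finite.injective_iff_bijective.1 hd)).trans Fin.revPerm,
    fun i => ?_⟩
  have := hf.score_lt i
  simp only [Equiv.trans_apply, Equiv.ofBijective_apply, Fin.revPerm_apply, Fin.val_rev, d]
  omega

def ofPerm (σ : Equiv.Perm (Fin n)) (e : Edge n) : Fin n :=
  if σ e.1.1 < σ e.1.2 then e.1.1 else e.1.2

theorem isOrientation_ofPerm (σ : Equiv.Perm (Fin n)) : IsOrientation (ofPerm σ) := by
  intro e
  unfold ofPerm
  split_ifs <;> simp

theorem beats_ofPerm_iff {σ : Equiv.Perm (Fin n)} : Beats (ofPerm σ) i j ↔ σ i < σ j := by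
  constructor
  · rintro ⟨e, he, hfe⟩
    have hij := he.ne
    have hσ : σ i ≠ σ j := σ.injective.ne hij
    rcases he with h | h <;> simp only [ofPerm, h] at hfe <;> split_ifs at hfe with hlt
    · exact hlt
    · exact absurd hfe.symm hij
    · exact absurd hfe hij.symm
    · exact lt_of_le_of_ne (not_lt.1 hlt) hσ
  · intro hlt
    obtain ⟨e, he⟩ := Edge.exists_joins (ne_of_apply_ne σ hlt.ne)
    refine ⟨e, he, ?_⟩
    rcases he with h | h <;> simp [ofPerm, h, hlt, hlt.not_gt]

theorem score_ofPerm (σ : Equiv.Perm (Fin n)) (i : Fin n) :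
    (score (ofPerm σ) i : ℤ) = n - 1 - σ i := by
  rw [← (isOrientation_ofPerm σ).card_beats]
  have hcard : #{j | Beats (ofPerm σ) i j} = #(Ioi (σ i)) :=
    card_equiv σ fun j => by simp [beats_ofPerm_iff]
  rw [hcard, Fin.card_Ioi]
  have := (σ i).isLt
  omega

theorem ofPerm_le (σ : Equiv.Perm (Fin n)) (hf : IsOrientation f) (e : Edge n) :
    σ (ofPerm σ e) ≤ σ (f e) := by
  unfold ofPerm
  rcases hf e with h | h <;> rw [h] <;> split_ifs with hlt
  exacts [le_rfl, not_lt.1 hlt, hlt.le, le_rfl]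

def scoreVec (f : Edge n → Fin n) : Fin n → ℝ := ∑ e, Pi.single (f e) 1

def scoreVecs (n : ℕ) : Set (Fin n → ℝ) := {x | ∃ f, IsOrientation f ∧ x = scoreVec f}

theorem scoreVec_apply (f : Edge n → Fin n) (i : Fin n) : scoreVec f i = score f i := by
  simp [scoreVec, score, Finset.sum_apply, Pi.single_apply, eq_comm]

theorem scoreVec_update (f : Edge n → Fin n) (e : Edge n) (t : Fin n) :
    scoreVec (Function.update f e t) = scoreVec f - Pi.single (f e) 1 + Pi.single t 1 := by
  simp only [scoreVec, Function.apply_update (fun _ j => Pi.single j (1 : ℝ)),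
    sum_update_of_mem (mem_univ e), sdiff_singleton_eq_erase, ← add_sum_erase _ _ (mem_univ e)]
  abel

theorem IsOrientation.flip_mem_scoreVecs (hf : IsOrientation f) (h : Beats f i j) :
    scoreVec f - Pi.single i 1 + Pi.single j 1 ∈ scoreVecs n := by
  obtain ⟨e, he, hfe⟩ := h
  exact ⟨_, hf.update he, by rw [scoreVec_update, hfe]⟩

theorem scoreVec_ofPerm (σ : Equiv.Perm (Fin n)) :
    scoreVec (ofPerm σ) = fun i => (((n : ℤ) - 1 - (σ i : ℕ)) : ℝ) := by
  ext i
  rw [scoreVec_apply]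
  exact_mod_cast score_ofPerm σ i

theorem not_beats_of_mem_extremePoints {A : Set (Fin n → ℝ)} (hA : Convex ℝ A)
    (hCA : scoreVecs n ⊆ A) (hf : IsOrientation f) (hx : scoreVec f ∈ A.extremePoints ℝ)
    (a b c : Fin n) (hab : Beats f a b) (hbc : Beats f b c) : ¬ Beats f c a := by
  intro hca
  have h := hA.eq_of_mem_extremePoints_of_add_add_eq hx (hCA (hf.flip_mem_scoreVecs hab))
    (hCA (hf.flip_mem_scoreVecs hbc)) (hCA (hf.flip_mem_scoreVecs hca)) (by module)
  simpa [Pi.single_apply, hab.ne] using congrFun h b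

def weight (σ : Equiv.Perm (Fin n)) : (Fin n → ℝ) →ₗ[ℝ] ℝ :=
  Fintype.linearCombination ℝ fun i => (σ i : ℝ) + 1

theorem weight_scoreVec (σ : Equiv.Perm (Fin n)) (f : Edge n → Fin n) :
    weight σ (scoreVec f) = ∑ e, ((σ (f e) : ℝ) + 1) := by
  simp [weight, scoreVec, map_sum, Fintype.linearCombination_apply_single]

theorem weight_scoreVec_ofPerm_lt {σ : Equiv.Perm (Fin n)} (hf : IsOrientation f)
    {q : Fin n → ℝ} (hq : 0 ≤ q) (hne : scoreVec f + q ≠ scoreVec (ofPerm σ)) :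
    weight σ (scoreVec (ofPerm σ)) < weight σ (scoreVec f + q) := by
  have hw : ∀ i, (0 : ℝ) < (σ i : ℝ) + 1 := fun i => by positivity
  rw [map_add]
  by_cases hfσ : f = ofPerm σ
  · subst hfσ
    have hq0 : q ≠ 0 := fun h => hne (by rw [h, add_zero])
    exact lt_add_of_pos_right _ (Fintype.linearCombination_pos hw (hq.lt_of_ne hq0.symm))
  · obtain ⟨e, he⟩ := Function.ne_iff.1 hfσ
    have hlt : weight σ (scoreVec (ofPerm σ)) < weight σ (scoreVec f) := by
      rw [weight_scoreVec, weight_scoreVec]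
      refine sum_lt_sum (fun e _ => by gcongr; exact ofPerm_le σ hf e) ⟨e, mem_univ e, ?_⟩
      gcongr
      exact (ofPerm_le σ hf e).lt_of_ne (σ.injective.ne (Ne.symm he))
    have hq' : 0 ≤ weight σ q := hq.eq_or_lt.elim (fun h => by simp [← h])
      (fun h => (Fintype.linearCombination_pos hw h).le)
    linarith

end Tournament

open Tournament in
/-- The vertices of the Newton polyhedron of the permutohedral ideal
`I_{n,2} = ∏_{i<j} (xᵢ, xⱼ)` are exactly the permutations of `(n-1, n-2, …, 1, 0)`. -/
theorem stmt_15 {n : ℕ}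
    (C : Set (Fin n → ℝ))
    (hC : C = {x | ∃ f : {p : Fin n × Fin n // p.1 < p.2} → Fin n,
      (∀ e, f e = e.val.1 ∨ f e = e.val.2) ∧ x = ∑ e, Pi.single (f e) (1 : ℝ)}) :
    Set.extremePoints ℝ (convexHull ℝ (C + {x : Fin n → ℝ | ∀ i, 0 ≤ x i})) =
      {x | ∃ σ : Equiv.Perm (Fin n), x = fun i => (((n : ℤ) - 1 - (σ i : ℕ)) : ℝ)} := by
  change C = scoreVecs n at hC
  have hQ : {x : Fin n → ℝ | ∀ i, 0 ≤ x i} = Set.Ici 0 := by ext; simp [Pi.le_def]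
  have hCS : scoreVecs n ⊆ convexHull ℝ (scoreVecs n + Set.Ici 0) :=
    (Set.subset_add_left _ le_rfl).trans (subset_convexHull ℝ _)
  rw [hC, hQ]
  ext x
  constructor
  · intro hx
    obtain ⟨f, hf, rfl⟩ := extremePoints_convexHull_add_Ici_subset _ hx
    obtain ⟨σ, hσ⟩ := hf.exists_perm_score
      (not_beats_of_mem_extremePoints (convex_convexHull ℝ _) hCS hf hx)
    exact ⟨σ, funext fun i => by rw [scoreVec_apply]; exact_mod_cast hσ i⟩
  · rintro ⟨σ, rfl⟩
    rw [← scoreVec_ofPerm]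
    refine mem_extremePoints_convexHull_of_forall_lt (weight σ)
      (Set.subset_add_left _ le_rfl ⟨ofPerm σ, isOrientation_ofPerm σ, rfl⟩) ?_
    rintro _ ⟨_, ⟨f, hf, rfl⟩, q, hq, rfl⟩ hne
    exact weight_scoreVec_ofPerm_lt hf hq hne
end

section
/- Let v be a point of the cloud C of I_{n,2} = ∏_{i<j}(x_i,x_j) whose associated tournament contains a directed cycle of length m. Then v is a convex combination (with equal weights 1/m) of m other points v^{(1)},...,v^{(m)} of C obtained by reversing one edge of the cycle at a time; hence v is not a vertex of conv(C + ℝ≥0^n). -/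
/-!
Reversing the edge `i → j` of a tournament moves its out-degree vector by `eⱼ - eᵢ`. Along a
directed cycle `c₀ → c₁ → ⋯ → c_m = c₀` these moves telescope to zero, so `v` is the average of
the `m` out-degree vectors obtained by reversing one cycle edge at a time, each of them different
from `v`. A point of a convex set `S` that is an average of points of `S \ {v}` is not extreme,
because `S \ {v}` is convex exactly when `v` is an extreme point.
-/

theorem Relation.TransGen.exists_chain {α : Type*} {r : α → α → Prop} {a b : α}
    (h : Relation.TransGen r a b) :
    ∃ m, 0 < m ∧ ∃ c : ℕ → α, c 0 = a ∧ c m = b ∧ ∀ k < m, r (c k) (c (k + 1)) := by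
  induction h with
  | single hab => exact ⟨1, one_pos, fun k => if k = 0 then a else _, rfl, rfl, by simpa⟩
  | @tail _ b _ hb ih =>
    obtain ⟨m, hm, c, hc0, hcm, hstep⟩ := ih
    refine ⟨m + 1, m.succ_pos, fun k => if k ≤ m then c k else b, by simp [hc0], by simp, ?_⟩
    intro k hk
    rcases Nat.lt_succ_iff_lt_or_eq.1 hk with hk | rfl
    · simpa [hk.le, Nat.succ_le_of_lt hk] using hstep k hk
    · simpa [hcm] using hb

theorem inv_card_smul_sum_add_sub_eq_self {𝕜 E : Type*} [DivisionRing 𝕜] [CharZero 𝕜]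
    [AddCommGroup E] [Module 𝕜 E] {m : ℕ} (hm : m ≠ 0) {u : ℕ → E}
    (hu : u m = u 0) (v : E) :
    (m : 𝕜)⁻¹ • ∑ k : Fin m, (v + u (k + 1) - u k) = v := by
  rw [Fin.sum_univ_eq_sum_range (fun k => v + u (k + 1) - u k)]
  simp only [add_sub_assoc]
  rw [Finset.sum_add_distrib, Finset.sum_range_sub, hu, sub_self, add_zero, Finset.sum_const,
    Finset.card_range, ← Nat.cast_smul_eq_nsmul 𝕜, smul_smul,
    inv_mul_cancel₀ (Nat.cast_ne_zero.2 hm), one_smul]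

theorem notMem_extremePoints_of_eq_average {𝕜 E : Type*} [Field 𝕜] [LinearOrder 𝕜]
    [IsStrictOrderedRing 𝕜] [AddCommGroup E] [Module 𝕜 E] {S : Set E} (hS : Convex 𝕜 S)
    {m : ℕ} (hm : 0 < m) {w : Fin m → E} {v : E} (hw : ∀ k, w k ∈ S ∧ w k ≠ v)
    (hv : v = (m : 𝕜)⁻¹ • ∑ k, w k) :
    v ∉ S.extremePoints 𝕜 := by
  intro hext
  have hconv := (hS.mem_extremePoints_iff_convex_sdiff.1 hext).2
  have hmem : ∑ k, (m : 𝕜)⁻¹ • w k ∈ S \ {v} := by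
    refine hconv.sum_mem (fun _ _ => by positivity) ?_ fun k _ => hw k
    rw [Finset.sum_const, Finset.card_univ, Fintype.card_fin, nsmul_eq_mul,
      mul_inv_cancel₀ (Nat.cast_ne_zero.2 hm.ne')]
  rw [← Finset.smul_sum, ← hv] at hmem
  exact hmem.2 rfl

section Tournament

variable {ι : Type*} [LinearOrder ι]

/-- `g i j` is the winner of the match between `i` and `j`. -/
def IsTournament (g : ι → ι → ι) : Prop :=
  (∀ i j, i ≠ j → g i j = i ∨ g i j = j) ∧ ∀ i j, g i j = g j i

def outDegree [Fintype ι] (g : ι → ι → ι) : ι → ℝ :=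
  ∑ p : {p : ι × ι // p.1 < p.2}, Pi.single (g p.1.1 p.1.2) 1

def reverseEdge (g : ι → ι → ι) (i j : ι) : ι → ι → ι :=
  fun a b => if s(a, b) = s(i, j) then j else g a b

theorem reverseEdge_comm {g : ι → ι → ι} (hg : ∀ a b, g a b = g b a) (i j a b : ι) :
    reverseEdge g i j a b = reverseEdge g i j b a := by
  simp only [reverseEdge, Sym2.eq_swap, hg a b]

theorem IsTournament.reverseEdge {g : ι → ι → ι} (hg : IsTournament g) (i j : ι) :
    IsTournament (reverseEdge g i j) := by
  refine ⟨fun a b hab => ?_, reverseEdge_comm hg.2 i j⟩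
  by_cases h : s(a, b) = s(i, j)
  · simp only [_root_.reverseEdge, if_pos h]
    rcases Sym2.eq_iff.1 h with ⟨-, rfl⟩ | ⟨rfl, -⟩ <;> simp
  · simpa only [_root_.reverseEdge, if_neg h] using hg.1 a b hab

theorem sum_lt_pairs_eq_of_comm {M : Type*} [Fintype ι] [AddCommMonoid M] {h : ι → ι → M}
    (hcomm : ∀ a b, h a b = h b a) {i j : ι} (hij : i ≠ j)
    (hsupp : ∀ a b, s(a, b) ≠ s(i, j) → h a b = 0) :
    ∑ p : {p : ι × ι // p.1 < p.2}, h p.1.1 p.1.2 = h i j := by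
  wlog hlt : i < j generalizing i j
  · rw [this hij.symm (fun a b hab => hsupp a b (by rwa [Sym2.eq_swap (a := i)]))
      (lt_of_le_of_ne (not_lt.1 hlt) hij.symm), hcomm]
  refine Fintype.sum_eq_single (⟨(i, j), hlt⟩ : {p : ι × ι // p.1 < p.2})
    fun p hp => hsupp _ _ fun hpij => hp ?_
  rcases Sym2.eq_iff.1 hpij with ⟨h1, h2⟩ | ⟨h1, h2⟩
  · exact Subtype.ext (Prod.ext h1 h2)
  · exact absurd (h1 ▸ h2 ▸ p.2) hlt.asymm

theorem outDegree_reverseEdge [Fintype ι] {g : ι → ι → ι} (hg : ∀ a b, g a b = g b a) {i j : ι}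
    (hij : i ≠ j) (hwin : g i j = i) :
    outDegree (reverseEdge g i j) = outDegree g + Pi.single j 1 - Pi.single i 1 := by
  have hdiff : outDegree (reverseEdge g i j) - outDegree g = Pi.single j 1 - Pi.single i 1 := by
    rw [outDegree, outDegree, ← Finset.sum_sub_distrib]
    refine (sum_lt_pairs_eq_of_comm (h := fun a b => (Pi.single (reverseEdge g i j a b) 1 -
        Pi.single (g a b) 1 : ι → ℝ)) (fun a b => by rw [reverseEdge_comm hg, hg]) hij
        (fun a b hab => by simp only [reverseEdge, if_neg hab, sub_self])).trans ?_
    simp only [reverseEdge, hwin, if_true]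
  rw [add_sub_assoc, ← hdiff, add_sub_cancel]

end Tournament

open Pointwise in
/-- If a point `v` of the cloud of `I_{n,2} = ∏_{i<j}(xᵢ,xⱼ)` comes from a choice
function (tournament) containing a directed cycle, then `v` is the equal-weight convex
combination of finitely many other points of the cloud; in particular `v` is not a
vertex of the Newton polyhedron. -/
theorem stmt_17 {n : ℕ}
    (C : Set (Fin n → ℝ))
    (hC : C = {x | ∃ g : Fin n → Fin n → Fin n,
      (∀ i j, i ≠ j → (g i j = i ∨ g i j = j)) ∧ (∀ i j, g i j = g j i) ∧
      x = ∑ p : {p : Fin n × Fin n // p.1 < p.2}, Pi.single (g p.val.1 p.val.2) (1 : ℝ)})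
    (f : Fin n → Fin n → Fin n)
    (hf : ∀ i j, i ≠ j → (f i j = i ∨ f i j = j)) (hfsymm : ∀ i j, f i j = f j i)
    (v : Fin n → ℝ)
    (hv : v = ∑ p : {p : Fin n × Fin n // p.1 < p.2}, Pi.single (f p.val.1 p.val.2) (1 : ℝ))
    (hcyc : ∃ x, Relation.TransGen (fun i j => i ≠ j ∧ f i j = i) x x) :
    (∃ m : ℕ, 0 < m ∧ ∃ w : Fin m → (Fin n → ℝ),
      (∀ i, w i ∈ C ∧ w i ≠ v) ∧ v = (m : ℝ)⁻¹ • ∑ i, w i) ∧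
    v ∉ Set.extremePoints ℝ (convexHull ℝ (C + {x : Fin n → ℝ | ∀ i, 0 ≤ x i})) := by
  obtain ⟨x, hx⟩ := hcyc
  obtain ⟨m, hm, c, hc0, hcm, hstep⟩ := hx.exists_chain
  let w : Fin m → (Fin n → ℝ) := fun k => outDegree (reverseEdge f (c k) (c (k + 1)))
  have hw : ∀ k : Fin m, w k = v + Pi.single (c (k + 1)) 1 - Pi.single (c k) 1 := fun k =>
    hv ▸ outDegree_reverseEdge hfsymm (hstep k k.2).1 (hstep k k.2).2
  have hwC : ∀ k, w k ∈ C ∧ w k ≠ v := by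
    intro k
    obtain ⟨hg₁, hg₂⟩ := IsTournament.reverseEdge ⟨hf, hfsymm⟩ (c k) (c (k + 1))
    refine ⟨hC ▸ ⟨_, hg₁, hg₂, rfl⟩, fun hwv => ?_⟩
    have := congrFun (hw k ▸ hwv) (c (k + 1))
    simp [(hstep k k.2).1.symm] at this
  have hvavg : v = (m : ℝ)⁻¹ • ∑ k, w k := by
    simp only [hw]
    exact (inv_card_smul_sum_add_sub_eq_self (u := fun k => Pi.single (c k) 1) hm.ne'
      (by rw [hcm, hc0]) v).symm
  have hC_sub : C ⊆ convexHull ℝ (C + {x : Fin n → ℝ | ∀ i, 0 ≤ x i}) :=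
    (Set.subset_add_left C (t := {x | ∀ i, 0 ≤ x i}) fun _ => le_rfl).trans (subset_convexHull ℝ _)
  exact ⟨⟨m, hm, w, hwC, hvavg⟩, notMem_extremePoints_of_eq_average (convex_convexHull ℝ _) hm
    (fun k => ⟨hC_sub (hwC k).1, (hwC k).2⟩) hvavg⟩
end
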